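/- Let p ∈ (0,1), q = 1 − p, and let (S_n, K_n)_{n≥0} be a random trie pair family with parameter p. Set μ(n) = E(S_n), ν(n) = E(K_n), and define the entire functions f̃₁₀(z) = e^{−z} Σ_{n≥0} μ(n) zⁿ/n! and f̃₀₁(z) = e^{−z} Σ_{n≥0} ν(n) zⁿ/n!. Then for all z ∈ ℂ: f̃₁₀(z) = f̃₁₀(pz) + f̃₁₀(qz) + 1 − (1 + z)e^{−z}, and f̃₀₁(z) = f̃₀₁(pz) + f̃₀₁(qz) + z(1 − e^{−z}). -/

import Mathlib

open MeasureTheory ProbabilityTheory Filter Topology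

noncomputable def binomialMeasure (n : ℕ) (p : ℝ) : Measure ℕ :=
  ∑ k ∈ Finset.range (n + 1),
    (ENNReal.ofReal ((n.choose k : ℝ) * p ^ k * (1 - p) ^ (n - k))) • Measure.dirac k

/-- The combination map `(B, (S',K')_j, (S'',K'')_j) ↦ (S'_B + S''_{n-B} + 1, K'_B + K''_{n-B} + n)`. -/
def trieStep (n : ℕ) (ω : ℕ × ((ℕ → ℕ × ℕ) × (ℕ → ℕ × ℕ))) : ℕ × ℕ :=
  ((ω.2.1 ω.1).1 + (ω.2.2 (n - ω.1)).1 + 1,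
   (ω.2.1 ω.1).2 + (ω.2.2 (n - ω.1)).2 + n)

/-- A random trie pair family with parameter `p`, given by the joint laws
`μ n` of `(S_n, K_n)` on `ℕ × ℕ`. -/
structure IsTriePairFamily (p : ℝ) (μ : ℕ → Measure (ℕ × ℕ)) : Prop where
  prob : ∀ n, IsProbabilityMeasure (μ n)
  moments : ∀ n r : ℕ, Integrable (fun x : ℕ × ℕ => ((x.1 : ℝ) + (x.2 : ℝ)) ^ r) (μ n)
  init0 : μ 0 = Measure.dirac (0, 0)
  init1 : μ 1 = Measure.dirac (0, 0)
  recur : ∀ n, 2 ≤ n → ∃ P : Measure (ℕ × ((ℕ → ℕ × ℕ) × (ℕ → ℕ × ℕ))),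
    IsProbabilityMeasure P ∧
    P.map Prod.fst = binomialMeasure n p ∧
    (∀ j, P.map (fun ω => ω.2.1 j) = μ j) ∧
    (∀ j, P.map (fun ω => ω.2.2 j) = μ j) ∧
    P = (P.map Prod.fst).prod
          ((P.map (fun ω => ω.2.1)).prod (P.map (fun ω => ω.2.2))) ∧
    μ n = P.map (trieStep n)

noncomputable def eS (μ : ℕ → Measure (ℕ × ℕ)) (n : ℕ) : ℝ := ∫ x, (x.1 : ℝ) ∂ μ n

noncomputable def eK (μ : ℕ → Measure (ℕ × ℕ)) (n : ℕ) : ℝ := ∫ x, (x.2 : ℝ) ∂ μ n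

noncomputable def varS (μ : ℕ → Measure (ℕ × ℕ)) (n : ℕ) : ℝ :=
  ∫ x, ((x.1 : ℝ) - eS μ n) ^ 2 ∂ μ n

noncomputable def varK (μ : ℕ → Measure (ℕ × ℕ)) (n : ℕ) : ℝ :=
  ∫ x, ((x.2 : ℝ) - eK μ n) ^ 2 ∂ μ n

noncomputable def covSK (μ : ℕ → Measure (ℕ × ℕ)) (n : ℕ) : ℝ :=
  ∫ x, ((x.1 : ℝ) - eS μ n) * ((x.2 : ℝ) - eK μ n) ∂ μ n

noncomputable def eSK (μ : ℕ → Measure (ℕ × ℕ)) (n : ℕ) : ℝ :=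
  ∫ x, (x.1 : ℝ) * (x.2 : ℝ) ∂ μ n

/-- Poisson generating function of `E(S_n)`. -/
noncomputable def pgfS (μ : ℕ → Measure (ℕ × ℕ)) (z : ℂ) : ℂ :=
  Complex.exp (-z) * ∑' n : ℕ, (eS μ n : ℂ) * z ^ n / (n.factorial : ℂ)

/-- Poisson generating function of `E(K_n)`. -/
noncomputable def pgfK (μ : ℕ → Measure (ℕ × ℕ)) (z : ℂ) : ℂ :=
  Complex.exp (-z) * ∑' n : ℕ, (eK μ n : ℂ) * z ^ n / (n.factorial : ℂ)

/-- Poisson generating function of `E(S_n K_n)`. -/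
noncomputable def pgfSK (μ : ℕ → Measure (ℕ × ℕ)) (z : ℂ) : ℂ :=
  Complex.exp (-z) * ∑' n : ℕ, (eSK μ n : ℂ) * z ^ n / (n.factorial : ℂ)

/-!
Conditioning on the first bit, the means `e n = E S_n` (resp. `E K_n`) satisfy
`e n = E e(B) + E e(n - B) + t n` for `n ≥ 2`, with `B ~ Binomial(n, p)` and toll `t n = 1`
resp. `t n = n`; the means are computed as lower integrals, which needs no integrability on the
product space of the recursion. An induction on this recursion gives `e n ≤ (2 / (p q))^n`, so the
exponential generating functions are entire, and by a Cauchy product binomial splitting becomes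
`∑ E e(B) zⁿ/n! = e^{qz} ∑ e k (pz)ᵏ/k!`. Multiplying by `e^{-z}` yields the functional equations;
since `e 0 = e 1 = 0`, the toll only contributes its generating function less its first two terms.
-/

open Finset

noncomputable def egf (f : ℕ → ℝ) (z : ℂ) : ℂ :=
  ∑' n : ℕ, (f n : ℂ) * z ^ n / (n.factorial : ℂ)

/-- For `q = 1 - p` this is `E f(B)` with `B ~ Binomial(n, p)`. -/
def binomialMean (p q : ℝ) (f : ℕ → ℝ) (n : ℕ) : ℝ :=
  ∑ k ∈ range (n + 1), n.choose k * p ^ k * q ^ (n - k) * f k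

lemma binomialMean_one (p q : ℝ) (n : ℕ) : binomialMean p q 1 n = (p + q) ^ n := by
  simp only [binomialMean, Pi.one_apply, mul_one, add_pow]
  exact sum_congr rfl fun k _ => by ring

lemma binomialMean_reflect (p q : ℝ) (f : ℕ → ℝ) (n : ℕ) :
    ∑ k ∈ range (n + 1), n.choose k * p ^ k * q ^ (n - k) * f (n - k) = binomialMean q p f n := by
  rw [binomialMean, ← sum_range_reflect]
  refine sum_congr rfl fun k hk => ?_
  have hk : k ≤ n := Nat.lt_succ_iff.mp (mem_range.mp hk)
  rw [Nat.add_sub_cancel, Nat.choose_symm hk, Nat.sub_sub_self hk]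
  ring

lemma binomialMean_eq_zero {p q : ℝ} {f : ℕ → ℝ} {n : ℕ} (h : ∀ k ≤ n, f k = 0) :
    binomialMean p q f n = 0 :=
  sum_eq_zero fun k hk => by rw [h k (Nat.lt_succ_iff.mp (mem_range.mp hk)), mul_zero]

lemma binomialMean_le {p q : ℝ} {f : ℕ → ℝ} {n : ℕ} (hp : 0 ≤ p) (hq : 0 ≤ q) (hpq : p + q = 1)
    {M : ℝ} (hM : 0 ≤ M) (hf : ∀ k < n, f k ≤ M) : binomialMean p q f n ≤ M + p ^ n * f n := by
  have hw : ∀ k, 0 ≤ (n.choose k : ℝ) * p ^ k * q ^ (n - k) := fun k => by positivity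
  have hsum : ∑ k ∈ range n, (n.choose k : ℝ) * p ^ k * q ^ (n - k) ≤ 1 := by
    calc _ ≤ ∑ k ∈ range (n + 1), (n.choose k : ℝ) * p ^ k * q ^ (n - k) :=
          sum_le_sum_of_subset_of_nonneg (range_subset_range.mpr n.le_succ) fun k _ _ => hw k
      _ = 1 := by simpa [binomialMean, hpq] using binomialMean_one p q n
  rw [binomialMean, sum_range_succ, Nat.choose_self, Nat.sub_self, pow_zero, Nat.cast_one,
    one_mul, mul_one]
  refine add_le_add_left ?_ _
  calc ∑ k ∈ range n, (n.choose k : ℝ) * p ^ k * q ^ (n - k) * f k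
      ≤ ∑ k ∈ range n, (n.choose k : ℝ) * p ^ k * q ^ (n - k) * M :=
        sum_le_sum fun k hk => mul_le_mul_of_nonneg_left (hf k (mem_range.mp hk)) (hw k)
    _ ≤ M := by rw [← sum_mul]; exact mul_le_of_le_one_left hM hsum

lemma le_pow_of_binomial_recursion {p : ℝ} (hp0 : 0 < p) (hp1 : p < 1) {e t : ℕ → ℝ}
    (he : ∀ n, 0 ≤ e n) (he0 : e 0 = 0) (he1 : e 1 = 0) (ht : ∀ n, 2 ≤ n → t n ≤ n)
    (hrec : ∀ n, 2 ≤ n →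
      e n = binomialMean p (1 - p) e n + binomialMean (1 - p) p e n + t n)
    (n : ℕ) : e n ≤ (2 / (p * (1 - p))) ^ n := by
  set q := 1 - p
  set a := 2 / (p * q)
  -- `a * (p * q) = 2` is what lets `2 p q e n ≤ 4 a^(n-1)` close the induction.
  have hq0 : 0 < q := sub_pos.mpr hp1
  have hapq : a * (p * q) = 2 := div_mul_cancel₀ 2 (by positivity)
  have ha2 : 2 ≤ a := by
    rw [le_div_iff₀ (by positivity)]
    nlinarith [sq_nonneg (p - q)]
  induction n using Nat.strong_induction_on with
  | _ n ih =>
  rcases lt_or_ge n 2 with hn | hn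
  · (interval_cases n <;> simp [he0, he1]); linarith
  have hM : ∀ k < n, e k ≤ a ^ (n - 1) := fun k hk =>
    (ih k hk).trans (pow_le_pow_right₀ (by linarith) (by omega))
  have hp := binomialMean_le hp0.le hq0.le (by ring) (by positivity) hM
  have hq := binomialMean_le hq0.le hp0.le (by ring) (by positivity) hM
  have hpow : p ^ n + q ^ n ≤ 1 - 2 * (p * q) := by
    have := pow_le_pow_of_le_one hp0.le hp1.le hn
    have := pow_le_pow_of_le_one hq0.le (by linarith) hn
    linear_combination (by linarith : p ^ n + q ^ n ≤ p ^ 2 + q ^ 2)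
  have hn_le : (n : ℝ) ≤ 2 * a ^ (n - 1) := by
    have h2n : (n : ℝ) ≤ 2 ^ n := by exact_mod_cast (Nat.lt_two_pow_self).le
    have : (2 : ℝ) ^ n = 2 * 2 ^ (n - 1) := by rw [← pow_succ']; congr 1; omega
    nlinarith [pow_le_pow_left₀ zero_le_two ha2 (n - 1)]
  have hkey : 2 * (p * q) * e n ≤ 4 * a ^ (n - 1) := by
    nlinarith [hrec n hn, ht n hn, he n]
  calc e n = a * (p * q) * e n / 2 := by rw [hapq]; ring
    _ ≤ a * (4 * a ^ (n - 1)) / 4 := by nlinarith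
    _ = a ^ (n - 1 + 1) := by ring
    _ = a ^ n := by rw [Nat.sub_add_cancel (by omega)]

lemma summable_norm_egf_of_abs_le_pow {f : ℕ → ℝ} {a : ℝ} (hf : ∀ n, |f n| ≤ a ^ n) (w : ℂ) :
    Summable fun n => ‖(f n : ℂ) * w ^ n / (n.factorial : ℂ)‖ := by
  refine .of_nonneg_of_le (fun n => norm_nonneg _) (fun n => ?_)
    (Real.summable_pow_div_factorial (a * ‖w‖))
  rw [norm_div, norm_mul, norm_pow, Complex.norm_real, Complex.norm_natCast, mul_pow]
  gcongr
  exact hf n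

lemma hasSum_exp_series (z : ℂ) : HasSum (fun n => z ^ n / (n.factorial : ℂ)) (Complex.exp z) := by
  rw [Complex.exp_eq_exp_ℂ]
  exact NormedSpace.expSeries_div_hasSum_exp z

lemma hasSum_natCast_mul_exp_series (z : ℂ) :
    HasSum (fun n : ℕ => (n : ℂ) * z ^ n / (n.factorial : ℂ)) (z * Complex.exp z) := by
  rw [← hasSum_nat_add_iff' 1]
  simp only [range_one, Finset.sum_singleton, CharP.cast_eq_zero, zero_mul, zero_div, sub_zero]
  refine ((hasSum_exp_series z).mul_left z).congr_fun fun n => ?_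
  rw [Nat.factorial_succ]
  push_cast
  field_simp
  ring

lemma hasSum_egf_binomialMean (p q : ℝ) {f : ℕ → ℝ}
    (hf : ∀ w : ℂ, Summable fun n => ‖(f n : ℂ) * w ^ n / (n.factorial : ℂ)‖) (z : ℂ) :
    HasSum (fun n => (binomialMean p q f n : ℂ) * z ^ n / (n.factorial : ℂ))
      (Complex.exp (q * z) * egf f (p * z)) := by
  set A : ℕ → ℂ := fun k => (f k : ℂ) * (p * z) ^ k / (k.factorial : ℂ)
  set B : ℕ → ℂ := fun m => (q * z) ^ m / (m.factorial : ℂ)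
  have hA : Summable fun k => ‖A k‖ := hf _
  have hB : Summable fun m => ‖B m‖ := by
    refine (summable_norm_egf_of_abs_le_pow (f := 1) (a := 1) (by simp) (q * z)).congr fun m => ?_
    simp [B]
  have hterm : ∀ n, (binomialMean p q f n : ℂ) * z ^ n / (n.factorial : ℂ) =
      ∑ k ∈ range (n + 1), A k * B (n - k) := by
    intro n
    simp only [binomialMean, A, B, Complex.ofReal_sum, Finset.sum_mul, Finset.sum_div]
    refine sum_congr rfl fun k hk => ?_
    have hk : k ≤ n := Nat.lt_succ_iff.mp (mem_range.mp hk)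
    have hfac : (n.choose k : ℂ) * k.factorial * (n - k).factorial = n.factorial := by
      exact_mod_cast Nat.choose_mul_factorial_mul_factorial hk
    have hz : z ^ n = z ^ k * z ^ (n - k) := by rw [← pow_add, Nat.add_sub_cancel' hk]
    have hc : (n.choose k : ℂ) ≠ 0 := by exact_mod_cast (Nat.choose_pos hk).ne'
    rw [← hfac, hz]
    push_cast
    field_simp
    ring
  have hprod := (summable_norm_sum_mul_range_of_summable_norm hA hB).of_norm
  rw [← (hasSum_exp_series _).tsum_eq, egf, mul_comm,
    tsum_mul_tsum_eq_tsum_sum_range_of_summable_norm hA hB]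
  exact (funext hterm) ▸ hprod.hasSum

lemma hasSum_egf_of_eq_of_two_le {d t : ℕ → ℝ} (hd0 : d 0 = 0) (hd1 : d 1 = 0)
    (hdt : ∀ n, 2 ≤ n → d n = t n) {z T : ℂ}
    (hT : HasSum (fun n => (t n : ℂ) * z ^ n / (n.factorial : ℂ)) T) :
    HasSum (fun n => (d n : ℂ) * z ^ n / (n.factorial : ℂ)) (T - t 0 - t 1 * z) := by
  rw [← hasSum_nat_add_iff' 2]
  rw [← hasSum_nat_add_iff' 2] at hT
  simp only [sum_range_succ, range_zero, sum_empty, hd0, hd1] at hT ⊢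
  convert hT using 1
  · exact funext fun n => by rw [hdt (n + 2) (by omega)]
  · simp only [Complex.ofReal_zero, pow_zero, pow_one, Nat.factorial_zero, Nat.factorial_one,
      Nat.cast_one, div_one]
    ring

theorem exp_neg_mul_egf_of_binomial_recursion {p : ℝ} (hp0 : 0 < p) (hp1 : p < 1) {e t : ℕ → ℝ}
    (he : ∀ n, 0 ≤ e n) (he0 : e 0 = 0) (he1 : e 1 = 0) (ht : ∀ n, 2 ≤ n → t n ≤ n)
    (hrec : ∀ n, 2 ≤ n →
      e n = binomialMean p (1 - p) e n + binomialMean (1 - p) p e n + t n)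
    {z T : ℂ} (hT : HasSum (fun n => (t n : ℂ) * z ^ n / (n.factorial : ℂ)) T) :
    Complex.exp (-z) * egf e z =
      Complex.exp (-(p * z)) * egf e (p * z)
        + Complex.exp (-(((1 - p : ℝ) : ℂ) * z)) * egf e ((1 - p : ℝ) * z)
        + Complex.exp (-z) * (T - t 0 - t 1 * z) := by
  have hsum (w : ℂ) : Summable fun n => ‖(e n : ℂ) * w ^ n / (n.factorial : ℂ)‖ :=
    summable_norm_egf_of_abs_le_pow (fun n => (abs_of_nonneg (he n)).trans_le
      (le_pow_of_binomial_recursion hp0 hp1 he he0 he1 ht hrec n)) w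
  set d : ℕ → ℝ := fun n => e n - binomialMean p (1 - p) e n - binomialMean (1 - p) p e n
  have he01 : ∀ k ≤ 1, e k = 0 := fun k hk => by interval_cases k <;> assumption
  have hd : HasSum (fun n => (d n : ℂ) * z ^ n / (n.factorial : ℂ)) (T - t 0 - t 1 * z) :=
    hasSum_egf_of_eq_of_two_le
      (by simp [d, he0, binomialMean_eq_zero fun k hk => he01 k (hk.trans zero_le_one)])
      (by simp [d, he1, binomialMean_eq_zero he01])
      (fun n hn => by simp only [d]; linarith [hrec n hn]) hT
  have hsplit := ((hasSum_egf_binomialMean p (1 - p) hsum z).add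
    (hasSum_egf_binomialMean (1 - p) p hsum z)).add hd
  rw [show egf e z = _ from (hsplit.congr_fun fun n => by simp only [d]; push_cast; ring).tsum_eq]
  have hexp (a b : ℂ) (hab : a + b = 1) : Complex.exp (-z) * Complex.exp (a * z) =
      Complex.exp (-(b * z)) := by
    rw [← Complex.exp_add]; congr 1; linear_combination z * hab
  linear_combination egf e (p * z) * hexp ((1 - p : ℝ) : ℂ) p (by push_cast; ring)
    + egf e ((1 - p : ℝ) * z) * hexp p ((1 - p : ℝ) : ℂ) (by push_cast; ring)

section TrieFamily

open scoped ENNReal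

lemma lintegral_binomialMeasure (n : ℕ) (p : ℝ) (f : ℕ → ℝ≥0∞) :
    ∫⁻ k, f k ∂binomialMeasure n p =
      ∑ k ∈ range (n + 1), ENNReal.ofReal (n.choose k * p ^ k * (1 - p) ^ (n - k)) * f k := by
  simp [binomialMeasure, lintegral_finsetSum_measure, lintegral_smul_measure, lintegral_dirac]

lemma measurable_trieStep (n : ℕ) : Measurable (trieStep n) := by
  refine (measurable_from_prod_countable_left fun k => ?_ : Measurable fun ω :
    ((ℕ → ℕ × ℕ) × (ℕ → ℕ × ℕ)) × ℕ => trieStep n (ω.2, ω.1)).comp measurable_swap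
  have : Measurable fun x : (ℕ → ℕ × ℕ) × (ℕ → ℕ × ℕ) => (x.1 k, x.2 (n - k)) := by fun_prop
  exact (measurable_of_countable
    fun y : (ℕ × ℕ) × (ℕ × ℕ) => (y.1.1 + y.2.1 + 1, y.1.2 + y.2.2 + n)).comp this

lemma integral_natCast_eq_toReal_lintegral {α : Type*} [MeasurableSpace α] (ν : Measure α)
    {g : α → ℕ} (hg : Measurable g) : ∫ x, (g x : ℝ) ∂ν = (∫⁻ x, (g x : ℝ≥0∞) ∂ν).toReal := by
  rw [integral_eq_lintegral_of_nonneg_ae (ae_of_all _ fun x => Nat.cast_nonneg _)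
    (measurable_from_nat.comp hg).aestronglyMeasurable]
  simp only [ENNReal.ofReal_natCast]

variable {p : ℝ} {μ : ℕ → Measure (ℕ × ℕ)}

theorem IsTriePairFamily.lintegral_eq_sum (hμ : IsTriePairFamily p μ) {n : ℕ} (hn : 2 ≤ n)
    (g : ℕ × ℕ → ℕ) (c : ℕ)
    (hg : ∀ ω, g (trieStep n ω) = g (ω.2.1 ω.1) + g (ω.2.2 (n - ω.1)) + c) :
    ∫⁻ x, (g x : ℝ≥0∞) ∂μ n = ∑ k ∈ range (n + 1),
      ENNReal.ofReal (n.choose k * p ^ k * (1 - p) ^ (n - k)) *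
        (∫⁻ x, (g x : ℝ≥0∞) ∂μ k + ∫⁻ x, (g x : ℝ≥0∞) ∂μ (n - k) + c) := by
  obtain ⟨P, hP, hfst, hm1, hm2, hprod, hlaw⟩ := hμ.recur n hn
  have : IsProbabilityMeasure (P.map Prod.snd) := Measure.isProbabilityMeasure_map (by fun_prop)
  have : IsProbabilityMeasure (P.map Prod.fst) := Measure.isProbabilityMeasure_map (by fun_prop)
  have hPρ : P = (binomialMeasure n p).prod (P.map Prod.snd) := by
    have hsnd : P.map Prod.snd = (P.map fun ω => ω.2.1).prod (P.map fun ω => ω.2.2) := by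
      conv_lhs => rw [hprod]
      rw [Measure.map_snd_prod, measure_univ, one_smul]
    rw [hsnd, ← hfst]
    exact hprod
  set ρ := P.map Prod.snd
  have hρ1 (j : ℕ) : ∫⁻ x, (g (x.1 j) : ℝ≥0∞) ∂ρ = ∫⁻ x, (g x : ℝ≥0∞) ∂μ j := by
    have hmap : ρ.map (fun x => x.1 j) = μ j := by
      rw [Measure.map_map (by fun_prop) measurable_snd]; exact hm1 j
    rw [← hmap, lintegral_map (measurable_of_countable _)
      (by fun_prop : Measurable fun x : (ℕ → ℕ × ℕ) × (ℕ → ℕ × ℕ) => x.1 j)]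
  have hρ2 (j : ℕ) : ∫⁻ x, (g (x.2 j) : ℝ≥0∞) ∂ρ = ∫⁻ x, (g x : ℝ≥0∞) ∂μ j := by
    have hmap : ρ.map (fun x => x.2 j) = μ j := by
      rw [Measure.map_map (by fun_prop) measurable_snd]; exact hm2 j
    rw [← hmap, lintegral_map (measurable_of_countable _)
      (by fun_prop : Measurable fun x : (ℕ → ℕ × ℕ) × (ℕ → ℕ × ℕ) => x.2 j)]
  have hinner (b : ℕ) : ∫⁻ x, (g (trieStep n (b, x)) : ℝ≥0∞) ∂ρ =
      ∫⁻ x, (g x : ℝ≥0∞) ∂μ b + ∫⁻ x, (g x : ℝ≥0∞) ∂μ (n - b) + c := by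
    simp only [hg, Nat.cast_add]
    rw [lintegral_add_right _ measurable_const, lintegral_add_right _ (by fun_prop), hρ1, hρ2,
      lintegral_const, measure_univ, mul_one]
  have hF : Measurable fun ω => (g (trieStep n ω) : ℝ≥0∞) :=
    (measurable_of_countable fun x : ℕ × ℕ => (g x : ℝ≥0∞)).comp (measurable_trieStep n)
  rw [hlaw, lintegral_map (measurable_of_countable _) (measurable_trieStep n), hPρ,
    lintegral_prod _ hF.aemeasurable]
  simp only [hinner, lintegral_binomialMeasure]

theorem IsTriePairFamily.lintegral_ne_top (hμ : IsTriePairFamily p μ) {g : ℕ × ℕ → ℕ}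
    (hg : ∀ x, g x ≤ x.1 + x.2) (j : ℕ) : ∫⁻ x, (g x : ℝ≥0∞) ∂μ j ≠ ⊤ := by
  refine ((lintegral_mono fun x => ?_).trans_lt (hμ.moments j 1).lintegral_lt_top).ne
  rw [pow_one, ← Nat.cast_add, ENNReal.ofReal_natCast]
  exact Nat.cast_le.mpr (hg x)

theorem IsTriePairFamily.integral_eq_binomialMean (hμ : IsTriePairFamily p μ) (hp0 : 0 ≤ p)
    (hp1 : p ≤ 1) {n : ℕ} (hn : 2 ≤ n) {g : ℕ × ℕ → ℕ} {c : ℕ}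
    (hg : ∀ ω, g (trieStep n ω) = g (ω.2.1 ω.1) + g (ω.2.2 (n - ω.1)) + c)
    (hgle : ∀ x, g x ≤ x.1 + x.2) :
    ∫ x, (g x : ℝ) ∂μ n =
      binomialMean p (1 - p) (fun j => ∫ x, (g x : ℝ) ∂μ j) n
        + binomialMean (1 - p) p (fun j => ∫ x, (g x : ℝ) ∂μ j) n + c := by
  have hfin := hμ.lintegral_ne_top hgle
  have hw : ∑ k ∈ range (n + 1), (n.choose k : ℝ) * p ^ k * (1 - p) ^ (n - k) = 1 := by
    simpa [binomialMean] using binomialMean_one p (1 - p) n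
  have hw0 (k : ℕ) : (ENNReal.ofReal ((n.choose k : ℝ) * p ^ k * (1 - p) ^ (n - k))).toReal =
      (n.choose k : ℝ) * p ^ k * (1 - p) ^ (n - k) :=
    ENNReal.toReal_ofReal (by have := sub_nonneg.mpr hp1; positivity)
  simp only [integral_natCast_eq_toReal_lintegral _ (measurable_of_countable g)]
  rw [hμ.lintegral_eq_sum hn g c hg, ENNReal.toReal_sum fun k _ => ENNReal.mul_ne_top
    ENNReal.ofReal_ne_top (by simp [hfin]), ← binomialMean_reflect p (1 - p), binomialMean]
  simp only [ENNReal.toReal_mul, hw0, ENNReal.toReal_add (ENNReal.add_ne_top.mpr ⟨hfin _, hfin _⟩)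
    (ENNReal.natCast_ne_top c), ENNReal.toReal_add (hfin _) (hfin _), ENNReal.toReal_natCast]
  simp only [mul_add, sum_add_distrib, ← sum_mul, hw, one_mul]

theorem IsTriePairFamily.exp_neg_mul_egf (hμ : IsTriePairFamily p μ) (hp0 : 0 < p) (hp1 : p < 1)
    {g : ℕ × ℕ → ℕ} {c : ℕ → ℕ}
    (hg : ∀ n ω, g (trieStep n ω) = g (ω.2.1 ω.1) + g (ω.2.2 (n - ω.1)) + c n)
    (hgle : ∀ x, g x ≤ x.1 + x.2) (hg0 : g (0, 0) = 0) (hc : ∀ n, 2 ≤ n → c n ≤ n)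
    {e : ℕ → ℝ} (he : ∀ n, e n = ∫ x, (g x : ℝ) ∂μ n)
    {z T : ℂ} (hT : HasSum (fun n => ((c n : ℝ) : ℂ) * z ^ n / (n.factorial : ℂ)) T) :
    Complex.exp (-z) * egf e z =
      Complex.exp (-(p * z)) * egf e (p * z)
        + Complex.exp (-(((1 - p : ℝ) : ℂ) * z)) * egf e ((1 - p : ℝ) * z)
        + Complex.exp (-z) * (T - (c 0 : ℝ) - (c 1 : ℝ) * z) := by
  refine exp_neg_mul_egf_of_binomial_recursion hp0 hp1
    (fun n => (he n).trans_ge (integral_nonneg fun _ => Nat.cast_nonneg _))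
    (by simp [he, hμ.init0, hg0]) (by simp [he, hμ.init1, hg0])
    (fun n hn => by exact_mod_cast hc n hn) (fun n hn => ?_) hT
  simpa only [← he] using hμ.integral_eq_binomialMean hp0.le hp1.le hn (hg n) hgle

end TrieFamily

/-- functional equations for the Poisson generating functions of the means. -/
theorem stmt8 (p : ℝ) (hp0 : 0 < p) (hp1 : p < 1) (q : ℝ) (hq : q = 1 - p)
    (μ : ℕ → Measure (ℕ × ℕ)) (hμ : IsTriePairFamily p μ) :
    ∀ z : ℂ,
      pgfS μ z = pgfS μ ((p : ℂ) * z) + pgfS μ ((q : ℂ) * z)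
        + 1 - (1 + z) * Complex.exp (-z) ∧
      pgfK μ z = pgfK μ ((p : ℂ) * z) + pgfK μ ((q : ℂ) * z)
        + z * (1 - Complex.exp (-z)) := by
  subst hq
  intro z
  have hS := hμ.exp_neg_mul_egf hp0 hp1 (g := Prod.fst) (c := fun _ => 1) (fun _ _ => rfl)
    (fun x => Nat.le_add_right _ _) rfl (fun n hn => by omega) (e := eS μ) (fun _ => rfl)
    (by simpa using hasSum_exp_series z)
  have hK := hμ.exp_neg_mul_egf hp0 hp1 (g := Prod.snd) (c := fun n => n) (fun _ _ => rfl)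
    (fun x => Nat.le_add_left _ _) rfl (fun _ _ => le_rfl) (e := eK μ) (fun _ => rfl)
    (by simpa using hasSum_natCast_mul_exp_series z)
  have hexp : Complex.exp (-z) * Complex.exp z = 1 := by
    rw [← Complex.exp_add, neg_add_cancel, Complex.exp_zero]
  simp only [show pgfS μ = fun w => Complex.exp (-w) * egf (eS μ) w from rfl,
    show pgfK μ = fun w => Complex.exp (-w) * egf (eK μ) w from rfl]
  push_cast at hS hK ⊢
  exact ⟨by linear_combination hS + hexp, by linear_combination hK + z * hexp⟩
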